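/- arXiv:1407.1012 — 7 statements merged into one kernel-verified Lean document; each statement's English description precedes it below -/
import Mathlib

section
/- Let F : C → D be a Frobenius monoidal functor between monoidal categories and let X be an object of C with a left dual SX (with unit d : 1 → X ⊗ SX and counit e : SX ⊗ X → 1). Then FSX is a left dual of FX, with unit F d ∘ f_0 followed by F_2 : 1 → FX ⊗ FSX, and counit F_0 ∘ F e ∘ f_2 : FSX ⊗ FX → 1; that is, the triangle identities hold for these morphisms. -/
/-!
Apply `F` to a triangle composite of `C`. By the Frobenius condition, the middle part
`δ ▷ F X ≫ α ≫ F X ◁ μ` of the corresponding composite in `D` equals `μ ≫ F.map α ≫ δ`;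
naturality then carries the outer `μ` and `δ` to the ends, where they cancel against
`ε` and `η` by (op)lax unitality. Hence each triangle composite in `D` is `F` applied to
the corresponding one in `C`, which is `F.map (𝟙 _) = 𝟙 _`.
-/

open CategoryTheory MonoidalCategory CategoryTheory.Functor.LaxMonoidal
  CategoryTheory.Functor.OplaxMonoidal

universe v₁ v₂ u₁ u₂

namespace CategoryTheory.Functor

variable {C : Type u₁} [Category.{v₁} C] [MonoidalCategory C]
  {D : Type u₂} [Category.{v₂} D] [MonoidalCategory D]
  (F : C ⥤ D) [F.LaxMonoidal] [F.OplaxMonoidal] {X Y : C}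

theorem frobenius_leftTriangle_eq_map (d : 𝟙_ C ⟶ X ⊗ Y) (e : Y ⊗ X ⟶ 𝟙_ C)
    (frob : μ F (X ⊗ Y) X ≫ F.map (α_ X Y X).hom ≫ δ F X (Y ⊗ X) =
      δ F X Y ▷ F.obj X ≫ (α_ (F.obj X) (F.obj Y) (F.obj X)).hom ≫ F.obj X ◁ μ F Y X) :
    (λ_ (F.obj X)).inv ≫ (ε F ≫ F.map d ≫ δ F X Y) ▷ F.obj X ≫
        (α_ (F.obj X) (F.obj Y) (F.obj X)).hom ≫
        F.obj X ◁ (μ F Y X ≫ F.map e ≫ η F) ≫ (ρ_ (F.obj X)).hom =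
      F.map ((λ_ X).inv ≫ d ▷ X ≫ (α_ X Y X).hom ≫ X ◁ e ≫ (ρ_ X).hom) := by
  simp only [comp_whiskerRight, MonoidalCategory.whiskerLeft_comp, Category.assoc]
  slice_lhs 4 6 => rw [← frob]
  simp only [Category.assoc]
  rw [μ_natural_left_assoc, δ_natural_right_assoc, left_unitality_inv_assoc,
    right_unitality_hom]
  simp only [F.map_comp]

theorem frobenius_rightTriangle_eq_map (d : 𝟙_ C ⟶ X ⊗ Y) (e : Y ⊗ X ⟶ 𝟙_ C)
    (frob : μ F Y (X ⊗ Y) ≫ F.map (α_ Y X Y).inv ≫ δ F (Y ⊗ X) Y =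
      F.obj Y ◁ δ F X Y ≫ (α_ (F.obj Y) (F.obj X) (F.obj Y)).inv ≫ μ F Y X ▷ F.obj Y) :
    (ρ_ (F.obj Y)).inv ≫ F.obj Y ◁ (ε F ≫ F.map d ≫ δ F X Y) ≫
        (α_ (F.obj Y) (F.obj X) (F.obj Y)).inv ≫
        (μ F Y X ≫ F.map e ≫ η F) ▷ F.obj Y ≫ (λ_ (F.obj Y)).hom =
      F.map ((ρ_ Y).inv ≫ Y ◁ d ≫ (α_ Y X Y).inv ≫ e ▷ Y ≫ (λ_ Y).hom) := by
  simp only [comp_whiskerRight, MonoidalCategory.whiskerLeft_comp, Category.assoc]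
  slice_lhs 4 6 => rw [← frob]
  simp only [Category.assoc]
  rw [μ_natural_right_assoc, δ_natural_left_assoc, right_unitality_inv_assoc,
    left_unitality_hom]
  simp only [F.map_comp]

end CategoryTheory.Functor

/-- A Frobenius monoidal functor preserves left duals: if `SX` is a left dual of `X`
(with unit `d` and counit `e`), then `F SX` is a left dual of `F X`, with unit
`ε ≫ F.map d ≫ δ` and counit `μ ≫ F.map e ≫ η`. -/
theorem frobenius_preserves_left_duals
    {C : Type u₁} [Category.{v₁} C] [MonoidalCategory C]
    {D : Type u₂} [Category.{v₂} D] [MonoidalCategory D]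
    (F : C ⥤ D) [F.LaxMonoidal] [F.OplaxMonoidal]
    (frob1 : ∀ X Y Z : C,
      μ F X (Y ⊗ Z) ≫ F.map (α_ X Y Z).inv ≫ δ F (X ⊗ Y) Z =
        (𝟙 (F.obj X) ⊗ₘ δ F Y Z) ≫ (α_ (F.obj X) (F.obj Y) (F.obj Z)).inv ≫
          (μ F X Y ⊗ₘ 𝟙 (F.obj Z)))
    (frob2 : ∀ X Y Z : C,
      μ F (X ⊗ Y) Z ≫ F.map (α_ X Y Z).hom ≫ δ F X (Y ⊗ Z) =
        (δ F X Y ⊗ₘ 𝟙 (F.obj Z)) ≫ (α_ (F.obj X) (F.obj Y) (F.obj Z)).hom ≫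
          (𝟙 (F.obj X) ⊗ₘ μ F Y Z))
    (X SX : C) (d : 𝟙_ C ⟶ X ⊗ SX) (e : SX ⊗ X ⟶ 𝟙_ C)
    (h1 : (λ_ X).inv ≫ (d ⊗ₘ 𝟙 X) ≫ (α_ X SX X).hom ≫ (𝟙 X ⊗ₘ e) ≫ (ρ_ X).hom = 𝟙 X)
    (h2 : (ρ_ SX).inv ≫ (𝟙 SX ⊗ₘ d) ≫ (α_ SX X SX).inv ≫ (e ⊗ₘ 𝟙 SX) ≫ (λ_ SX).hom = 𝟙 SX) :
    ((λ_ (F.obj X)).inv ≫ ((ε F ≫ F.map d ≫ δ F X SX) ⊗ₘ 𝟙 (F.obj X)) ≫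
        (α_ (F.obj X) (F.obj SX) (F.obj X)).hom ≫
        (𝟙 (F.obj X) ⊗ₘ (μ F SX X ≫ F.map e ≫ η F)) ≫ (ρ_ (F.obj X)).hom = 𝟙 (F.obj X)) ∧
    ((ρ_ (F.obj SX)).inv ≫ (𝟙 (F.obj SX) ⊗ₘ (ε F ≫ F.map d ≫ δ F X SX)) ≫
        (α_ (F.obj SX) (F.obj X) (F.obj SX)).inv ≫
        ((μ F SX X ≫ F.map e ≫ η F) ⊗ₘ 𝟙 (F.obj SX)) ≫ (λ_ (F.obj SX)).hom = 𝟙 (F.obj SX)) := by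
  simp only [tensorHom_id, id_tensorHom] at frob1 frob2 h1 h2 ⊢
  rw [F.frobenius_leftTriangle_eq_map d e (frob2 X SX X),
    F.frobenius_rightTriangle_eq_map d e (frob1 SX X SX), h1, h2]
  exact ⟨F.map_id X, F.map_id SX⟩
end

section
/- Let F : C → D be a Frobenius monoidal functor between left autonomous categories. Then the natural transformation κ : SFX → FSX defined as the composite (e_{FX} ⊗ 1) ∘ (1 ⊗ F_2) ∘ (1 ⊗ F d_X) ∘ (1 ⊗ f_0) : SFX → SFX ⊗ FX ⊗ FSX → FSX is an isomorphism, with inverse (F_0 ⊗ 1) ∘ (F e_X ⊗ 1) ∘ (f_2 ⊗ 1) ∘ (1 ⊗ d_{FX}) : FSX → SFX. -/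
/-! A Frobenius monoidal functor preserves duals: if `(X, SX)` is an exact pairing (`SX` is a
right dual of `X` in Mathlib's terminology, the paper's left dual), so is `(FX, F(SX))`, with
coevaluation `F_2 ∘ F d_X ∘ f_0` and evaluation `F_0 ∘ F e_X ∘ f_2`. In its zig-zag identities the
Frobenius law lets `f_2` and `F_2` pass each other, after which naturality and unitality reduce
them to `F` applied to the zig-zag identities of `C`. Then `S(FX)` and `F(SX)` are two duals of
`FX`, and `κ`, `κ⁻¹` are the two halves of the canonical isomorphism between them.
-/

open CategoryTheory MonoidalCategory CategoryTheory.Functor.LaxMonoidal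
  CategoryTheory.Functor.OplaxMonoidal

universe v₁ v₂ u₁ u₂

section

variable {C : Type u₁} [Category.{v₁} C] [MonoidalCategory C]
variable {D : Type u₂} [Category.{v₂} D] [MonoidalCategory D]
variable (F : C ⥤ D) [F.LaxMonoidal] [F.OplaxMonoidal]
variable (SC : C → C) (dC : ∀ X : C, 𝟙_ C ⟶ X ⊗ SC X) (eC : ∀ X : C, SC X ⊗ X ⟶ 𝟙_ C)
variable (SD : D → D) (dD : ∀ X : D, 𝟙_ D ⟶ X ⊗ SD X) (eD : ∀ X : D, SD X ⊗ X ⟶ 𝟙_ D)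

/-- The canonical morphism `κ : S(FX) ⟶ F(SX)` associated to a Frobenius monoidal functor,
`κ = (e_{FX} ⊗ 1) ∘ (1 ⊗ F_2) ∘ (1 ⊗ F d_X) ∘ (1 ⊗ f_0)`. -/
noncomputable def kappa (X : C) : SD (F.obj X) ⟶ F.obj (SC X) :=
  (ρ_ (SD (F.obj X))).inv ≫
    (𝟙 (SD (F.obj X)) ⊗ₘ (ε F ≫ F.map (dC X) ≫ δ F X (SC X))) ≫
    (α_ (SD (F.obj X)) (F.obj X) (F.obj (SC X))).inv ≫
    (eD (F.obj X) ⊗ₘ 𝟙 (F.obj (SC X))) ≫ (λ_ (F.obj (SC X))).hom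

/-- The candidate inverse `(F_0 ⊗ 1) ∘ (F e_X ⊗ 1) ∘ (f_2 ⊗ 1) ∘ (1 ⊗ d_{FX})`. -/
noncomputable def kappaInv (X : C) : F.obj (SC X) ⟶ SD (F.obj X) :=
  (ρ_ (F.obj (SC X))).inv ≫
    (𝟙 (F.obj (SC X)) ⊗ₘ dD (F.obj X)) ≫
    (α_ (F.obj (SC X)) (F.obj X) (SD (F.obj X))).inv ≫
    ((μ F (SC X) X ≫ F.map (eC X) ≫ η F) ⊗ₘ 𝟙 (SD (F.obj X))) ≫ (λ_ (SD (F.obj X))).hom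

namespace CategoryTheory

@[reducible]
def ExactPairing.ofTriangles {X Y : C} (η : 𝟙_ C ⟶ X ⊗ Y) (ε : Y ⊗ X ⟶ 𝟙_ C)
    (h₁ : (λ_ X).inv ≫ (η ⊗ₘ 𝟙 X) ≫ (α_ X Y X).hom ≫ (𝟙 X ⊗ₘ ε) ≫ (ρ_ X).hom = 𝟙 X)
    (h₂ : (ρ_ Y).inv ≫ (𝟙 Y ⊗ₘ η) ≫ (α_ Y X Y).inv ≫ (ε ⊗ₘ 𝟙 Y) ≫ (λ_ Y).hom = 𝟙 Y) :
    ExactPairing X Y where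
  coevaluation' := η
  evaluation' := ε
  coevaluation_evaluation' := by
    rw [← cancel_epi (ρ_ Y).inv, ← cancel_mono (λ_ Y).hom]
    simpa using h₂
  evaluation_coevaluation' := by
    rw [← cancel_epi (λ_ X).inv, ← cancel_mono (ρ_ X).hom]
    simpa using h₁

theorem rightDualIso_hom_eq {X Y₁ Y₂ : C} (p₁ : ExactPairing X Y₁) (p₂ : ExactPairing X Y₂) :
    (rightDualIso p₁ p₂).hom = (ρ_ Y₁).inv ≫ (𝟙 Y₁ ⊗ₘ p₂.coevaluation') ≫ (α_ Y₁ X Y₂).inv ≫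
      (p₁.evaluation' ⊗ₘ 𝟙 Y₂) ≫ (λ_ Y₂).hom := by
  simp [rightDualIso, rightAdjointMate, ExactPairing.coevaluation, ExactPairing.evaluation]

namespace Functor

variable (X Y : C) [ExactPairing X Y]

theorem frobenius_coevaluation_evaluation
    (frob : μ F Y (X ⊗ Y) ≫ F.map (α_ Y X Y).inv ≫ δ F (Y ⊗ X) Y =
      (𝟙 (F.obj Y) ⊗ₘ δ F X Y) ≫ (α_ (F.obj Y) (F.obj X) (F.obj Y)).inv ≫
        (μ F Y X ⊗ₘ 𝟙 (F.obj Y))) :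
    F.obj Y ◁ (ε F ≫ F.map (η_ X Y) ≫ δ F X Y) ≫ (α_ _ _ _).inv ≫
      (μ F Y X ≫ F.map (ε_ X Y) ≫ η F) ▷ F.obj Y = (ρ_ _).hom ≫ (λ_ _).inv := by
  simp only [id_tensorHom, tensorHom_id] at frob
  calc
    _ = F.obj Y ◁ ε F ≫ F.obj Y ◁ F.map (η_ X Y) ≫
        (F.obj Y ◁ δ F X Y ≫ (α_ _ _ _).inv ≫ μ F Y X ▷ F.obj Y) ≫
        F.map (ε_ X Y) ▷ F.obj Y ≫ η F ▷ F.obj Y := by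
      simp only [MonoidalCategory.whiskerLeft_comp, comp_whiskerRight, Category.assoc]
    _ = F.obj Y ◁ ε F ≫ μ F Y (𝟙_ C) ≫ F.map (Y ◁ η_ X Y ≫ (α_ Y X Y).inv ≫ ε_ X Y ▷ Y) ≫
        δ F (𝟙_ C) Y ≫ η F ▷ F.obj Y := by
      rw [← frob]
      simp only [Category.assoc, μ_natural_right_assoc, δ_natural_left_assoc, map_comp]
    _ = _ := by
      rw [ExactPairing.coevaluation_evaluation, F.map_comp_assoc,
        ← LaxMonoidal.right_unitality_assoc, ← OplaxMonoidal.left_unitality]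

theorem frobenius_evaluation_coevaluation
    (frob : μ F (X ⊗ Y) X ≫ F.map (α_ X Y X).hom ≫ δ F X (Y ⊗ X) =
      (δ F X Y ⊗ₘ 𝟙 (F.obj X)) ≫ (α_ (F.obj X) (F.obj Y) (F.obj X)).hom ≫
        (𝟙 (F.obj X) ⊗ₘ μ F Y X)) :
    (ε F ≫ F.map (η_ X Y) ≫ δ F X Y) ▷ F.obj X ≫ (α_ _ _ _).hom ≫
      F.obj X ◁ (μ F Y X ≫ F.map (ε_ X Y) ≫ η F) = (λ_ _).hom ≫ (ρ_ _).inv := by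
  simp only [id_tensorHom, tensorHom_id] at frob
  calc
    _ = ε F ▷ F.obj X ≫ F.map (η_ X Y) ▷ F.obj X ≫
        (δ F X Y ▷ F.obj X ≫ (α_ _ _ _).hom ≫ F.obj X ◁ μ F Y X) ≫
        F.obj X ◁ F.map (ε_ X Y) ≫ F.obj X ◁ η F := by
      simp only [MonoidalCategory.whiskerLeft_comp, comp_whiskerRight, Category.assoc]
    _ = ε F ▷ F.obj X ≫ μ F (𝟙_ C) X ≫ F.map (η_ X Y ▷ X ≫ (α_ X Y X).hom ≫ X ◁ ε_ X Y) ≫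
        δ F X (𝟙_ C) ≫ F.obj X ◁ η F := by
      rw [← frob]
      simp only [Category.assoc, μ_natural_left_assoc, δ_natural_right_assoc, map_comp]
    _ = _ := by
      rw [ExactPairing.evaluation_coevaluation, F.map_comp_assoc,
        ← LaxMonoidal.left_unitality_assoc, ← OplaxMonoidal.right_unitality]

@[reducible]
def mapExactPairing
    (frob₁ : μ F Y (X ⊗ Y) ≫ F.map (α_ Y X Y).inv ≫ δ F (Y ⊗ X) Y =
      (𝟙 (F.obj Y) ⊗ₘ δ F X Y) ≫ (α_ (F.obj Y) (F.obj X) (F.obj Y)).inv ≫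
        (μ F Y X ⊗ₘ 𝟙 (F.obj Y)))
    (frob₂ : μ F (X ⊗ Y) X ≫ F.map (α_ X Y X).hom ≫ δ F X (Y ⊗ X) =
      (δ F X Y ⊗ₘ 𝟙 (F.obj X)) ≫ (α_ (F.obj X) (F.obj Y) (F.obj X)).hom ≫
        (𝟙 (F.obj X) ⊗ₘ μ F Y X)) :
    ExactPairing (F.obj X) (F.obj Y) where
  coevaluation' := ε F ≫ F.map (η_ X Y) ≫ δ F X Y
  evaluation' := μ F Y X ≫ F.map (ε_ X Y) ≫ η F
  coevaluation_evaluation' := frobenius_coevaluation_evaluation F X Y frob₁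
  evaluation_coevaluation' := frobenius_evaluation_coevaluation F X Y frob₂

end Functor

end CategoryTheory

/-- For a Frobenius monoidal functor `F` between left autonomous categories, the canonical
natural transformation `κ : S(FX) ⟶ F(SX)` is an isomorphism, with explicit inverse
`(F_0 ⊗ 1) ∘ (F e_X ⊗ 1) ∘ (f_2 ⊗ 1) ∘ (1 ⊗ d_{FX})`. -/
theorem frobenius_kappa_isIso
    (hC1 : ∀ X : C, (λ_ X).inv ≫ (dC X ⊗ₘ 𝟙 X) ≫ (α_ X (SC X) X).hom ≫
      (𝟙 X ⊗ₘ eC X) ≫ (ρ_ X).hom = 𝟙 X)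
    (hC2 : ∀ X : C, (ρ_ (SC X)).inv ≫ (𝟙 (SC X) ⊗ₘ dC X) ≫ (α_ (SC X) X (SC X)).inv ≫
      (eC X ⊗ₘ 𝟙 (SC X)) ≫ (λ_ (SC X)).hom = 𝟙 (SC X))
    (hD1 : ∀ X : D, (λ_ X).inv ≫ (dD X ⊗ₘ 𝟙 X) ≫ (α_ X (SD X) X).hom ≫
      (𝟙 X ⊗ₘ eD X) ≫ (ρ_ X).hom = 𝟙 X)
    (hD2 : ∀ X : D, (ρ_ (SD X)).inv ≫ (𝟙 (SD X) ⊗ₘ dD X) ≫ (α_ (SD X) X (SD X)).inv ≫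
      (eD X ⊗ₘ 𝟙 (SD X)) ≫ (λ_ (SD X)).hom = 𝟙 (SD X))
    (frob1 : ∀ X Y Z : C,
      μ F X (Y ⊗ Z) ≫ F.map (α_ X Y Z).inv ≫ δ F (X ⊗ Y) Z =
        (𝟙 (F.obj X) ⊗ₘ δ F Y Z) ≫ (α_ (F.obj X) (F.obj Y) (F.obj Z)).inv ≫
          (μ F X Y ⊗ₘ 𝟙 (F.obj Z)))
    (frob2 : ∀ X Y Z : C,
      μ F (X ⊗ Y) Z ≫ F.map (α_ X Y Z).hom ≫ δ F X (Y ⊗ Z) =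
        (δ F X Y ⊗ₘ 𝟙 (F.obj Z)) ≫ (α_ (F.obj X) (F.obj Y) (F.obj Z)).hom ≫
          (𝟙 (F.obj X) ⊗ₘ μ F Y Z))
    (X : C) :
    kappa F SC dC SD eD X ≫ kappaInv F SC eC SD dD X = 𝟙 (SD (F.obj X)) ∧
    kappaInv F SC eC SD dD X ≫ kappa F SC dC SD eD X = 𝟙 (F.obj (SC X)) := by
  let _ := ExactPairing.ofTriangles (dC X) (eC X) (hC1 X) (hC2 X)
  let dualD := ExactPairing.ofTriangles (dD (F.obj X)) (eD (F.obj X)) (hD1 _) (hD2 _)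
  let dualF := F.mapExactPairing X (SC X) (frob1 _ _ _) (frob2 _ _ _)
  have hκ : kappa F SC dC SD eD X = (rightDualIso dualD dualF).hom :=
    (rightDualIso_hom_eq dualD dualF).symm
  have hκInv : kappaInv F SC eC SD dD X = (rightDualIso dualD dualF).inv :=
    (rightDualIso_hom_eq dualF dualD).symm
  rw [hκ, hκInv]
  exact ⟨(rightDualIso dualD dualF).hom_inv_id, (rightDualIso dualD dualF).inv_hom_id⟩

end
end

section
/- Let (R, L) : C → D be a linear functor between monoidal categories. Then L1 is a left dual of R1, with unit ν^l_R ∘ r_0 : 1 → R1 ⊗ L1 and counit L_0 ∘ ν^l_L : L1 ⊗ R1 → 1; i.e., these morphisms satisfy the triangle identities exhibiting L1 as left dual of R1. -/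
open CategoryTheory MonoidalCategory

universe v₁ v₂ u₁ u₂

variable {C : Type u₁} [Category.{v₁} C] [MonoidalCategory C]
variable {D : Type u₂} [Category.{v₂} D] [MonoidalCategory D]

/-- The Cockett–Seely axioms for a linearly distributive (linear) functor `(R, L)` between
monoidal categories: `R` is lax monoidal, `L` is oplax monoidal, and the four (co)strengths
`νrR, νlR, νrL, νlL` satisfy the linear functor coherence conditions. -/
structure IsLinearFunctor (R L : C ⥤ D)
    (r2 : ∀ X Y : C, R.obj X ⊗ R.obj Y ⟶ R.obj (X ⊗ Y)) (r0 : 𝟙_ D ⟶ R.obj (𝟙_ C))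
    (L2 : ∀ X Y : C, L.obj (X ⊗ Y) ⟶ L.obj X ⊗ L.obj Y) (L0 : L.obj (𝟙_ C) ⟶ 𝟙_ D)
    (νrR : ∀ X Y : C, R.obj (X ⊗ Y) ⟶ L.obj X ⊗ R.obj Y)
    (νlR : ∀ X Y : C, R.obj (X ⊗ Y) ⟶ R.obj X ⊗ L.obj Y)
    (νrL : ∀ X Y : C, R.obj X ⊗ L.obj Y ⟶ L.obj (X ⊗ Y))
    (νlL : ∀ X Y : C, L.obj X ⊗ R.obj Y ⟶ L.obj (X ⊗ Y)) : Prop where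
  r2_natural : ∀ {X Y X' Y' : C} (f : X ⟶ X') (g : Y ⟶ Y'),
    (R.map f ⊗ₘ R.map g) ≫ r2 X' Y' = r2 X Y ≫ R.map (f ⊗ₘ g)
  L2_natural : ∀ {X Y X' Y' : C} (f : X ⟶ X') (g : Y ⟶ Y'),
    L2 X Y ≫ (L.map f ⊗ₘ L.map g) = L.map (f ⊗ₘ g) ≫ L2 X' Y'
  νrR_natural : ∀ {X Y X' Y' : C} (f : X ⟶ X') (g : Y ⟶ Y'),
    νrR X Y ≫ (L.map f ⊗ₘ R.map g) = R.map (f ⊗ₘ g) ≫ νrR X' Y'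
  νlR_natural : ∀ {X Y X' Y' : C} (f : X ⟶ X') (g : Y ⟶ Y'),
    νlR X Y ≫ (R.map f ⊗ₘ L.map g) = R.map (f ⊗ₘ g) ≫ νlR X' Y'
  νrL_natural : ∀ {X Y X' Y' : C} (f : X ⟶ X') (g : Y ⟶ Y'),
    (R.map f ⊗ₘ L.map g) ≫ νrL X' Y' = νrL X Y ≫ L.map (f ⊗ₘ g)
  νlL_natural : ∀ {X Y X' Y' : C} (f : X ⟶ X') (g : Y ⟶ Y'),
    (L.map f ⊗ₘ R.map g) ≫ νlL X' Y' = νlL X Y ≫ L.map (f ⊗ₘ g)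
  r2_associativity : ∀ X Y Z : C,
    (r2 X Y ⊗ₘ 𝟙 (R.obj Z)) ≫ r2 (X ⊗ Y) Z ≫ R.map (α_ X Y Z).hom =
      (α_ (R.obj X) (R.obj Y) (R.obj Z)).hom ≫ (𝟙 (R.obj X) ⊗ₘ r2 Y Z) ≫ r2 X (Y ⊗ Z)
  r2_left_unit : ∀ X : C,
    (r0 ⊗ₘ 𝟙 (R.obj X)) ≫ r2 (𝟙_ C) X ≫ R.map (λ_ X).hom = (λ_ (R.obj X)).hom
  r2_right_unit : ∀ X : C,
    (𝟙 (R.obj X) ⊗ₘ r0) ≫ r2 X (𝟙_ C) ≫ R.map (ρ_ X).hom = (ρ_ (R.obj X)).hom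
  L2_associativity : ∀ X Y Z : C,
    L2 (X ⊗ Y) Z ≫ (L2 X Y ⊗ₘ 𝟙 (L.obj Z)) ≫ (α_ (L.obj X) (L.obj Y) (L.obj Z)).hom =
      L.map (α_ X Y Z).hom ≫ L2 X (Y ⊗ Z) ≫ (𝟙 (L.obj X) ⊗ₘ L2 Y Z)
  L2_left_unit : ∀ X : C,
    L.map (λ_ X).inv ≫ L2 (𝟙_ C) X ≫ (L0 ⊗ₘ 𝟙 (L.obj X)) = (λ_ (L.obj X)).inv
  L2_right_unit : ∀ X : C,
    L.map (ρ_ X).inv ≫ L2 X (𝟙_ C) ≫ (𝟙 (L.obj X) ⊗ₘ L0) = (ρ_ (L.obj X)).inv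
  lf1a : ∀ X : C,
    νrR (𝟙_ C) X ≫ (L0 ⊗ₘ 𝟙 (R.obj X)) ≫ (λ_ (R.obj X)).hom = R.map (λ_ X).hom
  lf1b : ∀ X : C,
    νlR X (𝟙_ C) ≫ (𝟙 (R.obj X) ⊗ₘ L0) ≫ (ρ_ (R.obj X)).hom = R.map (ρ_ X).hom
  lf1c : ∀ X : C,
    (λ_ (L.obj X)).inv ≫ (r0 ⊗ₘ 𝟙 (L.obj X)) ≫ νrL (𝟙_ C) X = L.map (λ_ X).inv
  lf1d : ∀ X : C,
    (ρ_ (L.obj X)).inv ≫ (𝟙 (L.obj X) ⊗ₘ r0) ≫ νlL X (𝟙_ C) = L.map (ρ_ X).inv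
  lf2a : ∀ X Y Z : C,
    R.map (α_ X Y Z).hom ≫ νrR X (Y ⊗ Z) ≫ (𝟙 (L.obj X) ⊗ₘ νrR Y Z) =
      νrR (X ⊗ Y) Z ≫ (L2 X Y ⊗ₘ 𝟙 (R.obj Z)) ≫ (α_ (L.obj X) (L.obj Y) (R.obj Z)).hom
  lf2b : ∀ X Y Z : C,
    νlR (X ⊗ Y) Z ≫ (νlR X Y ⊗ₘ 𝟙 (L.obj Z)) ≫ (α_ (R.obj X) (L.obj Y) (L.obj Z)).hom =
      R.map (α_ X Y Z).hom ≫ νlR X (Y ⊗ Z) ≫ (𝟙 (R.obj X) ⊗ₘ L2 Y Z)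
  lf2c : ∀ X Y Z : C,
    (r2 X Y ⊗ₘ 𝟙 (L.obj Z)) ≫ νrL (X ⊗ Y) Z =
      (α_ (R.obj X) (R.obj Y) (L.obj Z)).hom ≫ (𝟙 (R.obj X) ⊗ₘ νrL Y Z) ≫
        νrL X (Y ⊗ Z) ≫ L.map (α_ X Y Z).inv
  lf2d : ∀ X Y Z : C,
    (𝟙 (L.obj X) ⊗ₘ r2 Y Z) ≫ νlL X (Y ⊗ Z) =
      (α_ (L.obj X) (R.obj Y) (R.obj Z)).inv ≫ (νlL X Y ⊗ₘ 𝟙 (R.obj Z)) ≫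
        νlL (X ⊗ Y) Z ≫ L.map (α_ X Y Z).hom
  lf3a : ∀ X Y Z : C,
    R.map (α_ X Y Z).hom ≫ νrR X (Y ⊗ Z) ≫ (𝟙 (L.obj X) ⊗ₘ νlR Y Z) =
      νlR (X ⊗ Y) Z ≫ (νrR X Y ⊗ₘ 𝟙 (L.obj Z)) ≫ (α_ (L.obj X) (R.obj Y) (L.obj Z)).hom
  lf3b : ∀ X Y Z : C,
    (α_ (R.obj X) (L.obj Y) (R.obj Z)).hom ≫ (𝟙 (R.obj X) ⊗ₘ νlL Y Z) ≫ νrL X (Y ⊗ Z) =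
      (νrL X Y ⊗ₘ 𝟙 (R.obj Z)) ≫ νlL (X ⊗ Y) Z ≫ L.map (α_ X Y Z).hom
  lf4a : ∀ X Y Z : C,
    (𝟙 (R.obj X) ⊗ₘ νrR Y Z) ≫ (α_ (R.obj X) (L.obj Y) (R.obj Z)).inv ≫
        (νrL X Y ⊗ₘ 𝟙 (R.obj Z)) =
      r2 X (Y ⊗ Z) ≫ R.map (α_ X Y Z).inv ≫ νrR (X ⊗ Y) Z
  lf4b : ∀ X Y Z : C,
    (νlR X Y ⊗ₘ 𝟙 (R.obj Z)) ≫ (α_ (R.obj X) (L.obj Y) (R.obj Z)).hom ≫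
        (𝟙 (R.obj X) ⊗ₘ νlL Y Z) =
      r2 (X ⊗ Y) Z ≫ R.map (α_ X Y Z).hom ≫ νlR X (Y ⊗ Z)
  lf4c : ∀ X Y Z : C,
    (νrR X Y ⊗ₘ 𝟙 (L.obj Z)) ≫ (α_ (L.obj X) (R.obj Y) (L.obj Z)).hom ≫
        (𝟙 (L.obj X) ⊗ₘ νrL Y Z) =
      νrL (X ⊗ Y) Z ≫ L.map (α_ X Y Z).hom ≫ L2 X (Y ⊗ Z)
  lf4d : ∀ X Y Z : C,
    (𝟙 (L.obj X) ⊗ₘ νlR Y Z) ≫ (α_ (L.obj X) (R.obj Y) (L.obj Z)).inv ≫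
        (νlL X Y ⊗ₘ 𝟙 (L.obj Z)) =
      νlL X (Y ⊗ Z) ≫ L.map (α_ X Y Z).inv ≫ L2 (X ⊗ Y) Z
  lf5a : ∀ X Y Z : C,
    (νrR X Y ⊗ₘ 𝟙 (R.obj Z)) ≫ (α_ (L.obj X) (R.obj Y) (R.obj Z)).hom ≫
        (𝟙 (L.obj X) ⊗ₘ r2 Y Z) =
      r2 (X ⊗ Y) Z ≫ R.map (α_ X Y Z).hom ≫ νrR X (Y ⊗ Z)
  lf5b : ∀ X Y Z : C,
    (𝟙 (R.obj X) ⊗ₘ νlR Y Z) ≫ (α_ (R.obj X) (R.obj Y) (L.obj Z)).inv ≫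
        (r2 X Y ⊗ₘ 𝟙 (L.obj Z)) =
      r2 X (Y ⊗ Z) ≫ R.map (α_ X Y Z).inv ≫ νlR (X ⊗ Y) Z
  lf5c : ∀ X Y Z : C,
    (𝟙 (R.obj X) ⊗ₘ L2 Y Z) ≫ (α_ (R.obj X) (L.obj Y) (L.obj Z)).inv ≫
        (νrL X Y ⊗ₘ 𝟙 (L.obj Z)) =
      νrL X (Y ⊗ Z) ≫ L.map (α_ X Y Z).inv ≫ L2 (X ⊗ Y) Z
  lf5d : ∀ X Y Z : C,
    (L2 X Y ⊗ₘ 𝟙 (R.obj Z)) ≫ (α_ (L.obj X) (L.obj Y) (R.obj Z)).hom ≫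
        (𝟙 (L.obj X) ⊗ₘ νlL Y Z) =
      νlL (X ⊗ Y) Z ≫ L.map (α_ X Y Z).hom ≫ L2 X (Y ⊗ Z)

/-
The interchange axiom `lf4b` at `(X, 1, Z)`, pre- and postcomposed with `R ρ⁻¹` and `L λ` and
simplified by the triangle identity, rewrites `r₂ ≫ ν^l_R` through the strengths `ν^l_R X 1` and
`ν^l_L 1 Z`. At `X = Z = 1` the first zigzag thus becomes `r₂ ≫ ν^l_R` flanked by `r₀` and `L₀`,
which the unit axioms `r2_left_unit` and `lf1b` cancel. The second zigzag is dual, via `lf4d`,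
`ν^l_L ≫ L₂`, `lf1d` and `L2_left_unit`.
-/

namespace IsLinearFunctor

variable {R L : C ⥤ D}
  {r2 : ∀ X Y : C, R.obj X ⊗ R.obj Y ⟶ R.obj (X ⊗ Y)} {r0 : 𝟙_ D ⟶ R.obj (𝟙_ C)}
  {L2 : ∀ X Y : C, L.obj (X ⊗ Y) ⟶ L.obj X ⊗ L.obj Y} {L0 : L.obj (𝟙_ C) ⟶ 𝟙_ D}
  {νrR : ∀ X Y : C, R.obj (X ⊗ Y) ⟶ L.obj X ⊗ R.obj Y}
  {νlR : ∀ X Y : C, R.obj (X ⊗ Y) ⟶ R.obj X ⊗ L.obj Y}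
  {νrL : ∀ X Y : C, R.obj X ⊗ L.obj Y ⟶ L.obj (X ⊗ Y)}
  {νlL : ∀ X Y : C, L.obj X ⊗ R.obj Y ⟶ L.obj (X ⊗ Y)}

theorem r2_natural_left (h : IsLinearFunctor R L r2 r0 L2 L0 νrR νlR νrL νlL)
    {X X' : C} (f : X ⟶ X') (Y : C) :
    R.map f ▷ R.obj Y ≫ r2 X' Y = r2 X Y ≫ R.map (f ▷ Y) := by
  simpa using h.r2_natural f (𝟙 Y)

theorem L2_natural_left (h : IsLinearFunctor R L r2 r0 L2 L0 νrR νlR νrL νlL)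
    {X X' : C} (f : X ⟶ X') (Y : C) :
    L2 X Y ≫ L.map f ▷ L.obj Y = L.map (f ▷ Y) ≫ L2 X' Y := by
  simpa using h.L2_natural f (𝟙 Y)

theorem νlR_natural_right (h : IsLinearFunctor R L r2 r0 L2 L0 νrR νlR νrL νlL)
    (X : C) {Y Y' : C} (g : Y ⟶ Y') :
    νlR X Y ≫ R.obj X ◁ L.map g = R.map (X ◁ g) ≫ νlR X Y' := by
  simpa using h.νlR_natural (𝟙 X) g

theorem νlL_natural_right (h : IsLinearFunctor R L r2 r0 L2 L0 νrR νlR νrL νlL)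
    (X : C) {Y Y' : C} (g : Y ⟶ Y') :
    L.obj X ◁ R.map g ≫ νlL X Y' = νlL X Y ≫ L.map (X ◁ g) := by
  simpa using h.νlL_natural (𝟙 X) g

theorem whiskerRight_r0_comp_r2 (h : IsLinearFunctor R L r2 r0 L2 L0 νrR νlR νrL νlL) (X : C) :
    r0 ▷ R.obj X ≫ r2 (𝟙_ C) X = (λ_ (R.obj X)).hom ≫ R.map (λ_ X).inv := by
  rw [← h.r2_left_unit X]
  simp

theorem νlR_comp_whiskerLeft_L0 (h : IsLinearFunctor R L r2 r0 L2 L0 νrR νlR νrL νlL) (X : C) :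
    νlR X (𝟙_ C) ≫ R.obj X ◁ L0 = R.map (ρ_ X).hom ≫ (ρ_ (R.obj X)).inv := by
  rw [← h.lf1b X]
  simp

theorem whiskerLeft_r0_comp_νlL (h : IsLinearFunctor R L r2 r0 L2 L0 νrR νlR νrL νlL) (X : C) :
    L.obj X ◁ r0 ≫ νlL X (𝟙_ C) = (ρ_ (L.obj X)).hom ≫ L.map (ρ_ X).inv := by
  rw [← h.lf1d X]
  simp

theorem L2_comp_whiskerRight_L0 (h : IsLinearFunctor R L r2 r0 L2 L0 νrR νlR νrL νlL) (X : C) :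
    L2 (𝟙_ C) X ≫ L0 ▷ L.obj X = L.map (λ_ X).hom ≫ (λ_ (L.obj X)).inv := by
  rw [← h.L2_left_unit X]
  simp

theorem r2_comp_νlR (h : IsLinearFunctor R L r2 r0 L2 L0 νrR νlR νrL νlL) (X Z : C) :
    r2 X Z ≫ νlR X Z =
      R.map (ρ_ X).inv ▷ R.obj Z ≫ νlR X (𝟙_ C) ▷ R.obj Z ≫ (α_ _ _ _).hom ≫
        R.obj X ◁ νlL (𝟙_ C) Z ≫ R.obj X ◁ L.map (λ_ Z).hom := by
  have h4b := h.lf4b X (𝟙_ C) Z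
  simp only [tensorHom_id, id_tensorHom] at h4b
  rw [reassoc_of% h4b, h.νlR_natural_right, reassoc_of% h.r2_natural_left,
    ← R.map_comp_assoc, ← R.map_comp_assoc, triangle_assoc_comp_right_inv]
  simp

theorem νlL_comp_L2 (h : IsLinearFunctor R L r2 r0 L2 L0 νrR νlR νrL νlL) (X Z : C) :
    νlL X Z ≫ L2 X Z =
      L.obj X ◁ R.map (λ_ Z).inv ≫ L.obj X ◁ νlR (𝟙_ C) Z ≫ (α_ _ _ _).inv ≫
        νlL X (𝟙_ C) ▷ L.obj Z ≫ L.map (ρ_ X).hom ▷ L.obj Z := by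
  have h4d := h.lf4d X (𝟙_ C) Z
  simp only [tensorHom_id, id_tensorHom] at h4d
  rw [reassoc_of% h4d, h.L2_natural_left, reassoc_of% h.νlL_natural_right,
    ← L.map_comp_assoc, ← L.map_comp_assoc, triangle_assoc_comp_left_inv]
  simp

end IsLinearFunctor

/-- For a linear functor `(R, L)` between monoidal categories, `L1` is a left dual of `R1`,
with unit `ν^l_R ∘ r₀` and counit `L₀ ∘ ν^l_L`. -/
theorem linearFunctor_unit_left_dual
    {R L : C ⥤ D}
    {r2 : ∀ X Y : C, R.obj X ⊗ R.obj Y ⟶ R.obj (X ⊗ Y)} {r0 : 𝟙_ D ⟶ R.obj (𝟙_ C)}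
    {L2 : ∀ X Y : C, L.obj (X ⊗ Y) ⟶ L.obj X ⊗ L.obj Y} {L0 : L.obj (𝟙_ C) ⟶ 𝟙_ D}
    {νrR : ∀ X Y : C, R.obj (X ⊗ Y) ⟶ L.obj X ⊗ R.obj Y}
    {νlR : ∀ X Y : C, R.obj (X ⊗ Y) ⟶ R.obj X ⊗ L.obj Y}
    {νrL : ∀ X Y : C, R.obj X ⊗ L.obj Y ⟶ L.obj (X ⊗ Y)}
    {νlL : ∀ X Y : C, L.obj X ⊗ R.obj Y ⟶ L.obj (X ⊗ Y)}
    (h : IsLinearFunctor R L r2 r0 L2 L0 νrR νlR νrL νlL) :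
    ((λ_ (R.obj (𝟙_ C))).inv ≫
      ((r0 ≫ R.map (λ_ (𝟙_ C)).inv ≫ νlR (𝟙_ C) (𝟙_ C)) ⊗ₘ 𝟙 (R.obj (𝟙_ C))) ≫
      (α_ (R.obj (𝟙_ C)) (L.obj (𝟙_ C)) (R.obj (𝟙_ C))).hom ≫
      (𝟙 (R.obj (𝟙_ C)) ⊗ₘ (νlL (𝟙_ C) (𝟙_ C) ≫ L.map (λ_ (𝟙_ C)).hom ≫ L0)) ≫
      (ρ_ (R.obj (𝟙_ C))).hom = 𝟙 (R.obj (𝟙_ C))) ∧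
    ((ρ_ (L.obj (𝟙_ C))).inv ≫
      (𝟙 (L.obj (𝟙_ C)) ⊗ₘ (r0 ≫ R.map (λ_ (𝟙_ C)).inv ≫ νlR (𝟙_ C) (𝟙_ C))) ≫
      (α_ (L.obj (𝟙_ C)) (R.obj (𝟙_ C)) (L.obj (𝟙_ C))).inv ≫
      ((νlL (𝟙_ C) (𝟙_ C) ≫ L.map (λ_ (𝟙_ C)).hom ≫ L0) ⊗ₘ 𝟙 (L.obj (𝟙_ C))) ≫
      (λ_ (L.obj (𝟙_ C))).hom = 𝟙 (L.obj (𝟙_ C))) := by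
  simp only [tensorHom_id, id_tensorHom, comp_whiskerRight, whiskerLeft_comp, Category.assoc]
  constructor
  · rw [unitors_inv_equal, ← reassoc_of% (h.r2_comp_νlR (𝟙_ C) (𝟙_ C))]
    rw [reassoc_of% (h.νlR_comp_whiskerLeft_L0 (𝟙_ C)),
      reassoc_of% (h.whiskerRight_r0_comp_r2 (𝟙_ C))]
    simp [← R.map_comp, unitors_inv_equal]
  · rw [unitors_equal, ← reassoc_of% (h.νlL_comp_L2 (𝟙_ C) (𝟙_ C))]
    rw [reassoc_of% (h.whiskerLeft_r0_comp_νlL (𝟙_ C)),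
      reassoc_of% (h.L2_comp_whiskerRight_L0 (𝟙_ C))]
    simp [← L.map_comp, unitors_equal]
end

section
/- Let (R, L) : C → D be a linear functor between monoidal categories. Then L1 is a right dual of R1, with unit ν^r_R ∘ r_0 : 1 → L1 ⊗ R1 and counit L_0 ∘ ν^r_L : R1 ⊗ L1 → 1 satisfying the triangle identities for a right dual. -/
open CategoryTheory MonoidalCategory

universe v₁ v₂ u₁ u₂

variable {C : Type u₁} [Category.{v₁} C] [MonoidalCategory C]
variable {D : Type u₂} [Category.{v₂} D] [MonoidalCategory D]

/-! Both triangle identities come down to the mixed associativity axioms `lf4a`, `lf4c` relating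
`ν^r_R` and `ν^r_L`. Against the counit, `ν^r_R` collapses to `r₂` followed by unitors (`lf1a`);
dually the unit followed by `ν^r_L` is unitors followed by `L₂` (`lf1c`). The zig-zags are then
the right unit laws of `r₂` and `L₂`, up to monoidal coherence in `C`. -/

def unitCoevaluation {R L : C ⥤ D} (r0 : 𝟙_ D ⟶ R.obj (𝟙_ C))
    (νrR : ∀ X Y : C, R.obj (X ⊗ Y) ⟶ L.obj X ⊗ R.obj Y) :
    𝟙_ D ⟶ L.obj (𝟙_ C) ⊗ R.obj (𝟙_ C) :=
  r0 ≫ R.map (λ_ (𝟙_ C)).inv ≫ νrR (𝟙_ C) (𝟙_ C)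

def unitEvaluation {R L : C ⥤ D} (νrL : ∀ X Y : C, R.obj X ⊗ L.obj Y ⟶ L.obj (X ⊗ Y))
    (L0 : L.obj (𝟙_ C) ⟶ 𝟙_ D) : R.obj (𝟙_ C) ⊗ L.obj (𝟙_ C) ⟶ 𝟙_ D :=
  νrL (𝟙_ C) (𝟙_ C) ≫ L.map (λ_ (𝟙_ C)).hom ≫ L0

namespace IsLinearFunctor

variable {R L : C ⥤ D}
    {r2 : ∀ X Y : C, R.obj X ⊗ R.obj Y ⟶ R.obj (X ⊗ Y)} {r0 : 𝟙_ D ⟶ R.obj (𝟙_ C)}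
    {L2 : ∀ X Y : C, L.obj (X ⊗ Y) ⟶ L.obj X ⊗ L.obj Y} {L0 : L.obj (𝟙_ C) ⟶ 𝟙_ D}
    {νrR : ∀ X Y : C, R.obj (X ⊗ Y) ⟶ L.obj X ⊗ R.obj Y}
    {νlR : ∀ X Y : C, R.obj (X ⊗ Y) ⟶ R.obj X ⊗ L.obj Y}
    {νrL : ∀ X Y : C, R.obj X ⊗ L.obj Y ⟶ L.obj (X ⊗ Y)}
    {νlL : ∀ X Y : C, L.obj X ⊗ R.obj Y ⟶ L.obj (X ⊗ Y)}

theorem whiskerLeft_map_r2 (h : IsLinearFunctor R L r2 r0 L2 L0 νrR νlR νrL νlL)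
    (X : C) {Y Y' : C} (g : Y ⟶ Y') :
    R.obj X ◁ R.map g ≫ r2 X Y' = r2 X Y ≫ R.map (X ◁ g) := by
  simpa using h.r2_natural (𝟙 X) g

theorem L2_whiskerLeft_map (h : IsLinearFunctor R L r2 r0 L2 L0 νrR νlR νrL νlL)
    (X : C) {Y Y' : C} (g : Y ⟶ Y') :
    L2 X Y ≫ L.obj X ◁ L.map g = L.map (X ◁ g) ≫ L2 X Y' := by
  simpa using h.L2_natural (𝟙 X) g

theorem νrR_map_whiskerRight (h : IsLinearFunctor R L r2 r0 L2 L0 νrR νlR νrL νlL)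
    {X X' : C} (f : X ⟶ X') (Y : C) :
    νrR X Y ≫ L.map f ▷ R.obj Y = R.map (f ▷ Y) ≫ νrR X' Y := by
  simpa using h.νrR_natural f (𝟙 Y)

theorem map_whiskerRight_νrL (h : IsLinearFunctor R L r2 r0 L2 L0 νrR νlR νrL νlL)
    {X X' : C} (f : X ⟶ X') (Y : C) :
    R.map f ▷ L.obj Y ≫ νrL X' Y = νrL X Y ≫ L.map (f ▷ Y) := by
  simpa using h.νrL_natural f (𝟙 Y)

theorem L2_rightUnitor (h : IsLinearFunctor R L r2 r0 L2 L0 νrR νlR νrL νlL) (X : C) :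
    L2 X (𝟙_ C) ≫ L.obj X ◁ L0 ≫ (ρ_ (L.obj X)).hom = L.map (ρ_ X).hom := by
  simpa using L.map (ρ_ X).hom ≫= h.L2_right_unit X =≫ (ρ_ (L.obj X)).hom

theorem whiskerLeft_νrR_unitEvaluation
    (h : IsLinearFunctor R L r2 r0 L2 L0 νrR νlR νrL νlL) (Z : C) :
    R.obj (𝟙_ C) ◁ νrR (𝟙_ C) Z ≫ (α_ _ _ _).inv ≫ unitEvaluation νrL L0 ▷ R.obj Z ≫
      (λ_ (R.obj Z)).hom = r2 (𝟙_ C) (𝟙_ C ⊗ Z) ≫ R.map ((λ_ (𝟙_ C ⊗ Z)).hom ≫ (λ_ Z).hom) := by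
  have h4a := h.lf4a (𝟙_ C) (𝟙_ C) Z
  have h1a := h.lf1a Z
  simp only [id_tensorHom, tensorHom_id] at h4a h1a
  simp only [unitEvaluation, comp_whiskerRight, Category.assoc]
  rw [reassoc_of% h4a, reassoc_of% (h.νrR_map_whiskerRight (λ_ (𝟙_ C)).hom Z), h1a]
  simp

theorem unitCoevaluation_whiskerRight_νrL
    (h : IsLinearFunctor R L r2 r0 L2 L0 νrR νlR νrL νlL) (Z : C) :
    (λ_ (L.obj Z)).inv ≫ unitCoevaluation r0 νrR ▷ L.obj Z ≫ (α_ _ _ _).hom ≫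
      L.obj (𝟙_ C) ◁ νrL (𝟙_ C) Z =
      L.map ((λ_ Z).inv ≫ (λ_ (𝟙_ C ⊗ Z)).inv) ≫ L2 (𝟙_ C) (𝟙_ C ⊗ Z) := by
  have h4c := h.lf4c (𝟙_ C) (𝟙_ C) Z
  have h1c := h.lf1c Z
  simp only [id_tensorHom, tensorHom_id] at h4c h1c
  simp only [unitCoevaluation, comp_whiskerRight, Category.assoc]
  rw [h4c, reassoc_of% (h.map_whiskerRight_νrL (λ_ (𝟙_ C)).inv Z), reassoc_of% h1c]
  simp

theorem rightUnitor_inv_whiskerLeft_unitCoevaluation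
    (h : IsLinearFunctor R L r2 r0 L2 L0 νrR νlR νrL νlL) :
    (ρ_ (R.obj (𝟙_ C))).inv ≫ R.obj (𝟙_ C) ◁ unitCoevaluation r0 νrR ≫ (α_ _ _ _).inv ≫
      unitEvaluation νrL L0 ▷ R.obj (𝟙_ C) ≫ (λ_ (R.obj (𝟙_ C))).hom = 𝟙 _ := by
  have hρ : 𝟙_ C ◁ (λ_ (𝟙_ C)).inv ≫ (λ_ (𝟙_ C ⊗ 𝟙_ C)).hom ≫ (λ_ (𝟙_ C)).hom =
      (ρ_ (𝟙_ C)).hom := by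
    monoidal
  have hr := h.r2_right_unit (𝟙_ C)
  simp only [id_tensorHom] at hr
  simp only [unitCoevaluation, whiskerLeft_comp, Category.assoc]
  rw [h.whiskerLeft_νrR_unitEvaluation, reassoc_of% (h.whiskerLeft_map_r2 _ _),
    ← R.map_comp, hρ, hr, Iso.inv_hom_id]

theorem leftUnitor_inv_unitCoevaluation_whiskerRight
    (h : IsLinearFunctor R L r2 r0 L2 L0 νrR νlR νrL νlL) :
    (λ_ (L.obj (𝟙_ C))).inv ≫ unitCoevaluation r0 νrR ▷ L.obj (𝟙_ C) ≫ (α_ _ _ _).hom ≫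
      L.obj (𝟙_ C) ◁ unitEvaluation νrL L0 ≫ (ρ_ (L.obj (𝟙_ C))).hom = 𝟙 _ := by
  have hid : (λ_ (𝟙_ C)).inv ≫ (λ_ (𝟙_ C ⊗ 𝟙_ C)).inv ≫ 𝟙_ C ◁ (λ_ (𝟙_ C)).hom ≫
      (ρ_ (𝟙_ C)).hom = 𝟙 _ := by
    monoidal
  simp only [unitEvaluation, whiskerLeft_comp, Category.assoc]
  rw [reassoc_of% h.unitCoevaluation_whiskerRight_νrL, reassoc_of% (h.L2_whiskerLeft_map _ _),
    h.L2_rightUnitor, ← L.map_comp, ← L.map_comp]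
  simp only [Category.assoc, hid, L.map_id]

end IsLinearFunctor

/-- For a linear functor `(R, L)` between monoidal categories, `L1` is a right dual of `R1`,
with unit `ν^r_R ∘ r₀ : 1 ⟶ L1 ⊗ R1` and counit `L₀ ∘ ν^r_L : R1 ⊗ L1 ⟶ 1`. -/
theorem linearFunctor_unit_right_dual
    {R L : C ⥤ D}
    {r2 : ∀ X Y : C, R.obj X ⊗ R.obj Y ⟶ R.obj (X ⊗ Y)} {r0 : 𝟙_ D ⟶ R.obj (𝟙_ C)}
    {L2 : ∀ X Y : C, L.obj (X ⊗ Y) ⟶ L.obj X ⊗ L.obj Y} {L0 : L.obj (𝟙_ C) ⟶ 𝟙_ D}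
    {νrR : ∀ X Y : C, R.obj (X ⊗ Y) ⟶ L.obj X ⊗ R.obj Y}
    {νlR : ∀ X Y : C, R.obj (X ⊗ Y) ⟶ R.obj X ⊗ L.obj Y}
    {νrL : ∀ X Y : C, R.obj X ⊗ L.obj Y ⟶ L.obj (X ⊗ Y)}
    {νlL : ∀ X Y : C, L.obj X ⊗ R.obj Y ⟶ L.obj (X ⊗ Y)}
    (h : IsLinearFunctor R L r2 r0 L2 L0 νrR νlR νrL νlL) :
    ((ρ_ (R.obj (𝟙_ C))).inv ≫
      (𝟙 (R.obj (𝟙_ C)) ⊗ₘ (r0 ≫ R.map (λ_ (𝟙_ C)).inv ≫ νrR (𝟙_ C) (𝟙_ C))) ≫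
      (α_ (R.obj (𝟙_ C)) (L.obj (𝟙_ C)) (R.obj (𝟙_ C))).inv ≫
      ((νrL (𝟙_ C) (𝟙_ C) ≫ L.map (λ_ (𝟙_ C)).hom ≫ L0) ⊗ₘ 𝟙 (R.obj (𝟙_ C))) ≫
      (λ_ (R.obj (𝟙_ C))).hom = 𝟙 (R.obj (𝟙_ C))) ∧
    ((λ_ (L.obj (𝟙_ C))).inv ≫
      ((r0 ≫ R.map (λ_ (𝟙_ C)).inv ≫ νrR (𝟙_ C) (𝟙_ C)) ⊗ₘ 𝟙 (L.obj (𝟙_ C))) ≫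
      (α_ (L.obj (𝟙_ C)) (R.obj (𝟙_ C)) (L.obj (𝟙_ C))).hom ≫
      (𝟙 (L.obj (𝟙_ C)) ⊗ₘ (νrL (𝟙_ C) (𝟙_ C) ≫ L.map (λ_ (𝟙_ C)).hom ≫ L0)) ≫
      (ρ_ (L.obj (𝟙_ C))).hom = 𝟙 (L.obj (𝟙_ C))) := by
  simp only [id_tensorHom, tensorHom_id]
  exact ⟨h.rightUnitor_inv_whiskerLeft_unitCoevaluation,
    h.leftUnitor_inv_unitCoevaluation_whiskerRight⟩
end

section
/- Let (R, L) : C → D be a linear functor between left autonomous categories. Then for every object X, RSX is a left dual of LX, with unit 𝔡 = ν^r_R ∘ R d_X ∘ r_0 : 1 → LX ⊗ RSX and counit 𝔢 = L_0 ∘ L e_X ∘ ν^r_L : RSX ⊗ LX → 1 satisfying the triangle identities. -/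
/-!
Each triangle identity for `(𝔡, 𝔢)` is the image under `L` (resp. `R`) of the corresponding
triangle identity of `(d_X, e_X)` in `C`. Axiom `lf4c` (resp. `lf4a`) turns the two strengths
meeting in the middle of the zigzag into `L₂` (resp. `r₂`); naturality then moves `L e_X`
(resp. `R d_X`) inside the functor, and the unit axioms absorb `r₀` and `L₀`.
-/

open CategoryTheory MonoidalCategory

universe v₁ v₂ u₁ u₂

variable {C : Type u₁} [Category.{v₁} C] [MonoidalCategory C]
variable {D : Type u₂} [Category.{v₂} D] [MonoidalCategory D]

namespace IsLinearFunctor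

variable {R L : C ⥤ D}
  {r2 : ∀ X Y : C, R.obj X ⊗ R.obj Y ⟶ R.obj (X ⊗ Y)} {r0 : 𝟙_ D ⟶ R.obj (𝟙_ C)}
  {L2 : ∀ X Y : C, L.obj (X ⊗ Y) ⟶ L.obj X ⊗ L.obj Y} {L0 : L.obj (𝟙_ C) ⟶ 𝟙_ D}
  {νrR : ∀ X Y : C, R.obj (X ⊗ Y) ⟶ L.obj X ⊗ R.obj Y}
  {νlR : ∀ X Y : C, R.obj (X ⊗ Y) ⟶ R.obj X ⊗ L.obj Y}
  {νrL : ∀ X Y : C, R.obj X ⊗ L.obj Y ⟶ L.obj (X ⊗ Y)}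
  {νlL : ∀ X Y : C, L.obj X ⊗ R.obj Y ⟶ L.obj (X ⊗ Y)}

theorem r2_whiskerLeft (h : IsLinearFunctor R L r2 r0 L2 L0 νrR νlR νrL νlL)
    (X : C) {Y Y' : C} (g : Y ⟶ Y') :
    (R.obj X ◁ R.map g) ≫ r2 X Y' = r2 X Y ≫ R.map (X ◁ g) := by
  simpa using h.r2_natural (𝟙 X) g

theorem whiskerLeft_L2 (h : IsLinearFunctor R L r2 r0 L2 L0 νrR νlR νrL νlL)
    (X : C) {Y Y' : C} (g : Y ⟶ Y') :
    L2 X Y ≫ (L.obj X ◁ L.map g) = L.map (X ◁ g) ≫ L2 X Y' := by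
  simpa using h.L2_natural (𝟙 X) g

theorem νrR_whiskerRight (h : IsLinearFunctor R L r2 r0 L2 L0 νrR νlR νrL νlL)
    {X X' : C} (f : X ⟶ X') (Y : C) :
    νrR X Y ≫ (L.map f ▷ R.obj Y) = R.map (f ▷ Y) ≫ νrR X' Y := by
  simpa using h.νrR_natural f (𝟙 Y)

theorem whiskerRight_νrL (h : IsLinearFunctor R L r2 r0 L2 L0 νrR νlR νrL νlL)
    {X X' : C} (f : X ⟶ X') (Y : C) :
    (R.map f ▷ L.obj Y) ≫ νrL X' Y = νrL X Y ≫ L.map (f ▷ Y) := by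
  simpa using h.νrL_natural f (𝟙 Y)

theorem L2_whiskerLeft_L0_rightUnitor (h : IsLinearFunctor R L r2 r0 L2 L0 νrR νlR νrL νlL)
    (X : C) :
    L2 X (𝟙_ C) ≫ (L.obj X ◁ L0) ≫ (ρ_ (L.obj X)).hom = L.map (ρ_ X).hom := by
  have hunit : L.map (ρ_ X).inv ≫ L2 X (𝟙_ C) ≫ (L.obj X ◁ L0) = (ρ_ (L.obj X)).inv := by
    simpa using h.L2_right_unit X
  rw [← cancel_epi (L.map (ρ_ X).inv), ← L.map_comp, Iso.inv_hom_id, L.map_id]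
  slice_lhs 1 3 => rw [hunit]
  exact Iso.inv_hom_id _

theorem rightUnitor_inv_r0_r2 (h : IsLinearFunctor R L r2 r0 L2 L0 νrR νlR νrL νlL)
    (X : C) :
    (ρ_ (R.obj X)).inv ≫ (R.obj X ◁ r0) ≫ r2 X (𝟙_ C) = R.map (ρ_ X).inv := by
  have hunit : (R.obj X ◁ r0) ≫ r2 X (𝟙_ C) ≫ R.map (ρ_ X).hom = (ρ_ (R.obj X)).hom := by
    simpa using h.r2_right_unit X
  rw [← cancel_mono (R.map (ρ_ X).hom), Category.assoc, Category.assoc, hunit, Iso.inv_hom_id,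
    ← R.map_comp, Iso.inv_hom_id, R.map_id]

theorem zigzag_L_eq_map_zigzag (h : IsLinearFunctor R L r2 r0 L2 L0 νrR νlR νrL νlL)
    {X Y : C} (d : 𝟙_ C ⟶ X ⊗ Y) (e : Y ⊗ X ⟶ 𝟙_ C) :
    (λ_ (L.obj X)).inv ≫ ((r0 ≫ R.map d ≫ νrR X Y) ▷ L.obj X) ≫
        (α_ (L.obj X) (R.obj Y) (L.obj X)).hom ≫
        (L.obj X ◁ (νrL Y X ≫ L.map e ≫ L0)) ≫ (ρ_ (L.obj X)).hom =
      L.map ((λ_ X).inv ≫ (d ▷ X) ≫ (α_ X Y X).hom ≫ (X ◁ e) ≫ (ρ_ X).hom) := by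
  have hstrength : (νrR X Y ▷ L.obj X) ≫ (α_ (L.obj X) (R.obj Y) (L.obj X)).hom ≫
      (L.obj X ◁ νrL Y X) = νrL (X ⊗ Y) X ≫ L.map (α_ X Y X).hom ≫ L2 X (Y ⊗ X) := by
    simpa using h.lf4c X Y X
  have hunit : (λ_ (L.obj X)).inv ≫ (r0 ▷ L.obj X) ≫ νrL (𝟙_ C) X = L.map (λ_ X).inv := by
    simpa using h.lf1c X
  simp only [comp_whiskerRight, whiskerLeft_comp, Category.assoc, L.map_comp]
  slice_lhs 4 6 => rw [hstrength]
  slice_lhs 6 7 => rw [h.whiskerLeft_L2]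
  slice_lhs 7 9 => rw [h.L2_whiskerLeft_L0_rightUnitor]
  slice_lhs 3 4 => rw [h.whiskerRight_νrL]
  slice_lhs 1 3 => rw [hunit]
  simp only [Category.assoc]

theorem zigzag_R_eq_map_zigzag (h : IsLinearFunctor R L r2 r0 L2 L0 νrR νlR νrL νlL)
    {X Y : C} (d : 𝟙_ C ⟶ X ⊗ Y) (e : Y ⊗ X ⟶ 𝟙_ C) :
    (ρ_ (R.obj Y)).inv ≫ (R.obj Y ◁ (r0 ≫ R.map d ≫ νrR X Y)) ≫
        (α_ (R.obj Y) (L.obj X) (R.obj Y)).inv ≫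
        ((νrL Y X ≫ L.map e ≫ L0) ▷ R.obj Y) ≫ (λ_ (R.obj Y)).hom =
      R.map ((ρ_ Y).inv ≫ (Y ◁ d) ≫ (α_ Y X Y).inv ≫ (e ▷ Y) ≫ (λ_ Y).hom) := by
  have hstrength : (R.obj Y ◁ νrR X Y) ≫ (α_ (R.obj Y) (L.obj X) (R.obj Y)).inv ≫
      (νrL Y X ▷ R.obj Y) = r2 Y (X ⊗ Y) ≫ R.map (α_ Y X Y).inv ≫ νrR (Y ⊗ X) Y := by
    simpa using h.lf4a Y X Y
  have hunit : νrR (𝟙_ C) Y ≫ (L0 ▷ R.obj Y) ≫ (λ_ (R.obj Y)).hom = R.map (λ_ Y).hom := by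
    simpa using h.lf1a Y
  simp only [comp_whiskerRight, whiskerLeft_comp, Category.assoc, R.map_comp]
  slice_lhs 4 6 => rw [hstrength]
  slice_lhs 3 4 => rw [h.r2_whiskerLeft]
  slice_lhs 1 3 => rw [h.rightUnitor_inv_r0_r2]
  slice_lhs 4 5 => rw [h.νrR_whiskerRight]
  slice_lhs 5 7 => rw [hunit]

end IsLinearFunctor

theorem linearFunctor_RS_left_dual_of_L_general
    {R L : C ⥤ D}
    {r2 : ∀ X Y : C, R.obj X ⊗ R.obj Y ⟶ R.obj (X ⊗ Y)} {r0 : 𝟙_ D ⟶ R.obj (𝟙_ C)}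
    {L2 : ∀ X Y : C, L.obj (X ⊗ Y) ⟶ L.obj X ⊗ L.obj Y} {L0 : L.obj (𝟙_ C) ⟶ 𝟙_ D}
    {νrR : ∀ X Y : C, R.obj (X ⊗ Y) ⟶ L.obj X ⊗ R.obj Y}
    {νlR : ∀ X Y : C, R.obj (X ⊗ Y) ⟶ R.obj X ⊗ L.obj Y}
    {νrL : ∀ X Y : C, R.obj X ⊗ L.obj Y ⟶ L.obj (X ⊗ Y)}
    {νlL : ∀ X Y : C, L.obj X ⊗ R.obj Y ⟶ L.obj (X ⊗ Y)}
    (h : IsLinearFunctor R L r2 r0 L2 L0 νrR νlR νrL νlL)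
    (SC : C → C) (dC : ∀ X : C, 𝟙_ C ⟶ X ⊗ SC X) (eC : ∀ X : C, SC X ⊗ X ⟶ 𝟙_ C)
    (hC1 : ∀ X : C, (λ_ X).inv ≫ (dC X ⊗ₘ 𝟙 X) ≫ (α_ X (SC X) X).hom ≫
      (𝟙 X ⊗ₘ eC X) ≫ (ρ_ X).hom = 𝟙 X)
    (hC2 : ∀ X : C, (ρ_ (SC X)).inv ≫ (𝟙 (SC X) ⊗ₘ dC X) ≫ (α_ (SC X) X (SC X)).inv ≫
      (eC X ⊗ₘ 𝟙 (SC X)) ≫ (λ_ (SC X)).hom = 𝟙 (SC X))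
    (X : C) :
    ((λ_ (L.obj X)).inv ≫
      ((r0 ≫ R.map (dC X) ≫ νrR X (SC X)) ⊗ₘ 𝟙 (L.obj X)) ≫
      (α_ (L.obj X) (R.obj (SC X)) (L.obj X)).hom ≫
      (𝟙 (L.obj X) ⊗ₘ (νrL (SC X) X ≫ L.map (eC X) ≫ L0)) ≫
      (ρ_ (L.obj X)).hom = 𝟙 (L.obj X)) ∧
    ((ρ_ (R.obj (SC X))).inv ≫
      (𝟙 (R.obj (SC X)) ⊗ₘ (r0 ≫ R.map (dC X) ≫ νrR X (SC X))) ≫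
      (α_ (R.obj (SC X)) (L.obj X) (R.obj (SC X))).inv ≫
      ((νrL (SC X) X ≫ L.map (eC X) ≫ L0) ⊗ₘ 𝟙 (R.obj (SC X))) ≫
      (λ_ (R.obj (SC X))).hom = 𝟙 (R.obj (SC X))) := by
  simp only [tensorHom_id, id_tensorHom] at hC1 hC2 ⊢
  constructor
  · rw [h.zigzag_L_eq_map_zigzag, hC1, L.map_id]
  · rw [h.zigzag_R_eq_map_zigzag, hC2, R.map_id]

/-- For a linear functor `(R, L)` between left autonomous categories, `R(SX)` is a left dual
of `LX`, with unit `𝔡 = ν^r_R ∘ R d_X ∘ r₀` and counit `𝔢 = L₀ ∘ L e_X ∘ ν^r_L`. -/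
theorem linearFunctor_RS_left_dual_of_L
    {R L : C ⥤ D}
    {r2 : ∀ X Y : C, R.obj X ⊗ R.obj Y ⟶ R.obj (X ⊗ Y)} {r0 : 𝟙_ D ⟶ R.obj (𝟙_ C)}
    {L2 : ∀ X Y : C, L.obj (X ⊗ Y) ⟶ L.obj X ⊗ L.obj Y} {L0 : L.obj (𝟙_ C) ⟶ 𝟙_ D}
    {νrR : ∀ X Y : C, R.obj (X ⊗ Y) ⟶ L.obj X ⊗ R.obj Y}
    {νlR : ∀ X Y : C, R.obj (X ⊗ Y) ⟶ R.obj X ⊗ L.obj Y}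
    {νrL : ∀ X Y : C, R.obj X ⊗ L.obj Y ⟶ L.obj (X ⊗ Y)}
    {νlL : ∀ X Y : C, L.obj X ⊗ R.obj Y ⟶ L.obj (X ⊗ Y)}
    (h : IsLinearFunctor R L r2 r0 L2 L0 νrR νlR νrL νlL)
    (SC : C → C) (dC : ∀ X : C, 𝟙_ C ⟶ X ⊗ SC X) (eC : ∀ X : C, SC X ⊗ X ⟶ 𝟙_ C)
    (hC1 : ∀ X : C, (λ_ X).inv ≫ (dC X ⊗ₘ 𝟙 X) ≫ (α_ X (SC X) X).hom ≫
      (𝟙 X ⊗ₘ eC X) ≫ (ρ_ X).hom = 𝟙 X)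
    (hC2 : ∀ X : C, (ρ_ (SC X)).inv ≫ (𝟙 (SC X) ⊗ₘ dC X) ≫ (α_ (SC X) X (SC X)).inv ≫
      (eC X ⊗ₘ 𝟙 (SC X)) ≫ (λ_ (SC X)).hom = 𝟙 (SC X))
    (SD : D → D) (dD : ∀ X : D, 𝟙_ D ⟶ X ⊗ SD X) (eD : ∀ X : D, SD X ⊗ X ⟶ 𝟙_ D)
    (hD1 : ∀ X : D, (λ_ X).inv ≫ (dD X ⊗ₘ 𝟙 X) ≫ (α_ X (SD X) X).hom ≫
      (𝟙 X ⊗ₘ eD X) ≫ (ρ_ X).hom = 𝟙 X)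
    (hD2 : ∀ X : D, (ρ_ (SD X)).inv ≫ (𝟙 (SD X) ⊗ₘ dD X) ≫ (α_ (SD X) X (SD X)).inv ≫
      (eD X ⊗ₘ 𝟙 (SD X)) ≫ (λ_ (SD X)).hom = 𝟙 (SD X))
    (X : C) :
    ((λ_ (L.obj X)).inv ≫
      ((r0 ≫ R.map (dC X) ≫ νrR X (SC X)) ⊗ₘ 𝟙 (L.obj X)) ≫
      (α_ (L.obj X) (R.obj (SC X)) (L.obj X)).hom ≫
      (𝟙 (L.obj X) ⊗ₘ (νrL (SC X) X ≫ L.map (eC X) ≫ L0)) ≫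
      (ρ_ (L.obj X)).hom = 𝟙 (L.obj X)) ∧
    ((ρ_ (R.obj (SC X))).inv ≫
      (𝟙 (R.obj (SC X)) ⊗ₘ (r0 ≫ R.map (dC X) ≫ νrR X (SC X))) ≫
      (α_ (R.obj (SC X)) (L.obj X) (R.obj (SC X))).inv ≫
      ((νrL (SC X) X ≫ L.map (eC X) ≫ L0) ⊗ₘ 𝟙 (R.obj (SC X))) ≫
      (λ_ (R.obj (SC X))).hom = 𝟙 (R.obj (SC X))) :=
  linearFunctor_RS_left_dual_of_L_general h SC dC eC hC1 hC2 X
end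

section
/- Let F : C → D be a Frobenius monoidal functor between monoidal categories. Then setting R = L = F, r_2 = f_2, r_0 = f_0, L_2 = F_2, L_0 = F_0, and ν^r_R = ν^l_R = F_2, ν^r_L = ν^l_L = f_2, the pair (R, L) is a linear functor: all the Cockett–Seely linear functor coherence axioms hold. -/
open CategoryTheory MonoidalCategory

universe v₁ v₂ u₁ u₂

variable {C : Type u₁} [Category.{v₁} C] [MonoidalCategory C]
variable {D : Type u₂} [Category.{v₂} D] [MonoidalCategory D]

open CategoryTheory.Functor.LaxMonoidal CategoryTheory.Functor.OplaxMonoidal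

open CategoryTheory.Functor

/-- A Frobenius monoidal functor `F` induces a linear functor with equal components
`R = L = F`, costrengths `ν^r_R = ν^l_R = F₂` (the oplax structure `δ`) and strengths
`ν^r_L = ν^l_L = f₂` (the lax structure `μ`): all the Cockett–Seely axioms hold. -/
theorem frobenius_gives_linearFunctor
    (F : C ⥤ D) [F.LaxMonoidal] [F.OplaxMonoidal]
    (frob1 : ∀ X Y Z : C,
      μ F X (Y ⊗ Z) ≫ F.map (α_ X Y Z).inv ≫ δ F (X ⊗ Y) Z =
        (𝟙 (F.obj X) ⊗ₘ δ F Y Z) ≫ (α_ (F.obj X) (F.obj Y) (F.obj Z)).inv ≫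
          (μ F X Y ⊗ₘ 𝟙 (F.obj Z)))
    (frob2 : ∀ X Y Z : C,
      μ F (X ⊗ Y) Z ≫ F.map (α_ X Y Z).hom ≫ δ F X (Y ⊗ Z) =
        (δ F X Y ⊗ₘ 𝟙 (F.obj Z)) ≫ (α_ (F.obj X) (F.obj Y) (F.obj Z)).hom ≫
          (𝟙 (F.obj X) ⊗ₘ μ F Y Z)) :
    IsLinearFunctor F F (μ F) (ε F) (δ F) (η F) (δ F) (δ F) (μ F) (μ F) :=
  { r2_natural := μ_natural F
    L2_natural := δ_natural F
    νrR_natural := δ_natural F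
    νlR_natural := δ_natural F
    νrL_natural := μ_natural F
    νlL_natural := μ_natural F
    r2_associativity X Y Z := by
      simpa only [tensorHom_id, id_tensorHom] using LaxMonoidal.associativity F X Y Z
    r2_left_unit X := by
      simpa only [tensorHom_id] using (LaxMonoidal.left_unitality F X).symm
    r2_right_unit X := by
      simpa only [id_tensorHom] using (LaxMonoidal.right_unitality F X).symm
    L2_associativity X Y Z := by
      simpa only [tensorHom_id, id_tensorHom] using OplaxMonoidal.associativity F X Y Z
    L2_left_unit X := by
      simpa only [tensorHom_id] using (OplaxMonoidal.left_unitality F X).symm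
    L2_right_unit X := by
      simpa only [id_tensorHom] using (OplaxMonoidal.right_unitality F X).symm
    lf1a X := by simpa only [tensorHom_id] using left_unitality_hom F X
    lf1b X := by simpa only [id_tensorHom] using right_unitality_hom F X
    lf1c X := by simpa only [tensorHom_id] using left_unitality_inv F X
    lf1d X := by simpa only [id_tensorHom] using right_unitality_inv F X
    lf2a X Y Z := by
      simpa only [tensorHom_id, id_tensorHom] using (OplaxMonoidal.associativity F X Y Z).symm
    lf2b X Y Z := by
      simpa only [tensorHom_id, id_tensorHom] using OplaxMonoidal.associativity F X Y Z
    lf2c X Y Z := by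
      simpa only [tensorHom_id, id_tensorHom] using μ_whiskerRight_comp_μ F X Y Z
    lf2d X Y Z := by
      simpa only [tensorHom_id, id_tensorHom] using whiskerLeft_μ_comp_μ F X Y Z
    lf3a X Y Z := by
      simpa only [tensorHom_id, id_tensorHom] using (OplaxMonoidal.associativity F X Y Z).symm
    lf3b X Y Z := by
      simpa only [tensorHom_id, id_tensorHom] using (LaxMonoidal.associativity F X Y Z).symm
    lf4a X Y Z := (frob1 X Y Z).symm
    lf4b X Y Z := (frob2 X Y Z).symm
    lf4c X Y Z := (frob2 X Y Z).symm
    lf4d X Y Z := (frob1 X Y Z).symm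
    lf5a X Y Z := (frob2 X Y Z).symm
    lf5b X Y Z := (frob1 X Y Z).symm
    lf5c X Y Z := (frob1 X Y Z).symm
    lf5d X Y Z := (frob2 X Y Z).symm }
end

section
/- Let (R, L) : C → D be a linear functor between monoidal categories, and suppose there is a natural isomorphism ω : R ≅ L satisfying ν^r_L ∘ (1 ⊗ ω) = ω ∘ r_2, ν^l_L ∘ (ω ⊗ 1) = ω ∘ r_2, (1 ⊗ ω) ∘ ν^r_R = L_2 ∘ ω, and (ω ⊗ 1) ∘ ν^l_R = L_2 ∘ ω. Then R, equipped with its lax structure (r_2, r_0) and the oplax structure transported from L along ω (namely R_2 = (ω⁻¹ ⊗ ω⁻¹) ∘ L_2 ∘ ω and R_0 = L_0 ∘ ω), is a Frobenius monoidal functor. -/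
open CategoryTheory MonoidalCategory

universe v₁ v₂ u₁ u₂

variable {C : Type u₁} [Category.{v₁} C] [MonoidalCategory C]
variable {D : Type u₂} [Category.{v₂} D] [MonoidalCategory D]

/-!
Write `R₂ = transportedδ ω L2` for the comultiplication transported from `L`. The last two
compatibilities of `ω` with the costrengths say precisely that `νlR X Y ≫ (R X ◁ ω⁻¹) = R₂` and
`νrR X Y ≫ (ω⁻¹ ▷ R Y) = R₂`. The two Frobenius laws are then the linear functor axioms `lf5b`
and `lf5a` whiskered by a single `ω⁻¹`, rearranged by the interchange law and naturality of the
associator.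
-/

namespace IsLinearFunctor

variable {R L : C ⥤ D}
  {r2 : ∀ X Y : C, R.obj X ⊗ R.obj Y ⟶ R.obj (X ⊗ Y)} {r0 : 𝟙_ D ⟶ R.obj (𝟙_ C)}
  {L2 : ∀ X Y : C, L.obj (X ⊗ Y) ⟶ L.obj X ⊗ L.obj Y} {L0 : L.obj (𝟙_ C) ⟶ 𝟙_ D}
  {νrR : ∀ X Y : C, R.obj (X ⊗ Y) ⟶ L.obj X ⊗ R.obj Y}
  {νlR : ∀ X Y : C, R.obj (X ⊗ Y) ⟶ R.obj X ⊗ L.obj Y}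
  {νrL : ∀ X Y : C, R.obj X ⊗ L.obj Y ⟶ L.obj (X ⊗ Y)}
  {νlL : ∀ X Y : C, L.obj X ⊗ R.obj Y ⟶ L.obj (X ⊗ Y)}

def transportedδ (ω : R ≅ L) (L2 : ∀ X Y : C, L.obj (X ⊗ Y) ⟶ L.obj X ⊗ L.obj Y) (X Y : C) :
    R.obj (X ⊗ Y) ⟶ R.obj X ⊗ R.obj Y :=
  ω.hom.app (X ⊗ Y) ≫ L2 X Y ≫ (ω.inv.app X ⊗ₘ ω.inv.app Y)

theorem νlR_comp_whiskerLeft_inv (ω : R ≅ L) {X Y : C}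
    (hω : νlR X Y ≫ (ω.hom.app X ⊗ₘ 𝟙 (L.obj Y)) = ω.hom.app (X ⊗ Y) ≫ L2 X Y) :
    νlR X Y ≫ R.obj X ◁ ω.inv.app Y = transportedδ ω L2 X Y := by
  rw [transportedδ, ← Category.assoc, ← hω, Category.assoc, tensorHom_comp_tensorHom]
  simp

theorem νrR_comp_whiskerRight_inv (ω : R ≅ L) {X Y : C}
    (hω : νrR X Y ≫ (𝟙 (L.obj X) ⊗ₘ ω.hom.app Y) = ω.hom.app (X ⊗ Y) ≫ L2 X Y) :
    νrR X Y ≫ ω.inv.app X ▷ R.obj Y = transportedδ ω L2 X Y := by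
  rw [transportedδ, ← Category.assoc, ← hω, Category.assoc, tensorHom_comp_tensorHom]
  simp

theorem transportedδ_frobenius_left (h : IsLinearFunctor R L r2 r0 L2 L0 νrR νlR νrL νlL)
    (ω : R ≅ L)
    (hω : ∀ X Y : C, νlR X Y ≫ (ω.hom.app X ⊗ₘ 𝟙 (L.obj Y)) = ω.hom.app (X ⊗ Y) ≫ L2 X Y)
    (X Y Z : C) :
    r2 X (Y ⊗ Z) ≫ R.map (α_ X Y Z).inv ≫ transportedδ ω L2 (X ⊗ Y) Z =
      R.obj X ◁ transportedδ ω L2 Y Z ≫ (α_ (R.obj X) (R.obj Y) (R.obj Z)).inv ≫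
        r2 X Y ▷ R.obj Z := by
  have lf5b : R.obj X ◁ νlR Y Z ≫ (α_ (R.obj X) (R.obj Y) (L.obj Z)).inv ≫ r2 X Y ▷ L.obj Z =
      r2 X (Y ⊗ Z) ≫ R.map (α_ X Y Z).inv ≫ νlR (X ⊗ Y) Z := by
    simpa using h.lf5b X Y Z
  rw [← νlR_comp_whiskerLeft_inv ω (hω _ _), ← νlR_comp_whiskerLeft_inv ω (hω _ _),
    reassoc_of% lf5b.symm, ← whisker_exchange, ← associator_inv_naturality_right_assoc,
    whiskerLeft_comp_assoc]

theorem transportedδ_frobenius_right (h : IsLinearFunctor R L r2 r0 L2 L0 νrR νlR νrL νlL)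
    (ω : R ≅ L)
    (hω : ∀ X Y : C, νrR X Y ≫ (𝟙 (L.obj X) ⊗ₘ ω.hom.app Y) = ω.hom.app (X ⊗ Y) ≫ L2 X Y)
    (X Y Z : C) :
    r2 (X ⊗ Y) Z ≫ R.map (α_ X Y Z).hom ≫ transportedδ ω L2 X (Y ⊗ Z) =
      transportedδ ω L2 X Y ▷ R.obj Z ≫ (α_ (R.obj X) (R.obj Y) (R.obj Z)).hom ≫
        R.obj X ◁ r2 Y Z := by
  have lf5a : νrR X Y ▷ R.obj Z ≫ (α_ (L.obj X) (R.obj Y) (R.obj Z)).hom ≫ L.obj X ◁ r2 Y Z =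
      r2 (X ⊗ Y) Z ≫ R.map (α_ X Y Z).hom ≫ νrR X (Y ⊗ Z) := by
    simpa using h.lf5a X Y Z
  rw [← νrR_comp_whiskerRight_inv ω (hω _ _), ← νrR_comp_whiskerRight_inv ω (hω _ _),
    reassoc_of% lf5a.symm, whisker_exchange, ← associator_naturality_left_assoc,
    comp_whiskerRight_assoc]

end IsLinearFunctor

theorem linearFunctor_with_compatible_iso_frobenius_general
    {R L : C ⥤ D}
    {r2 : ∀ X Y : C, R.obj X ⊗ R.obj Y ⟶ R.obj (X ⊗ Y)} {r0 : 𝟙_ D ⟶ R.obj (𝟙_ C)}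
    {L2 : ∀ X Y : C, L.obj (X ⊗ Y) ⟶ L.obj X ⊗ L.obj Y} {L0 : L.obj (𝟙_ C) ⟶ 𝟙_ D}
    {νrR : ∀ X Y : C, R.obj (X ⊗ Y) ⟶ L.obj X ⊗ R.obj Y}
    {νlR : ∀ X Y : C, R.obj (X ⊗ Y) ⟶ R.obj X ⊗ L.obj Y}
    {νrL : ∀ X Y : C, R.obj X ⊗ L.obj Y ⟶ L.obj (X ⊗ Y)}
    {νlL : ∀ X Y : C, L.obj X ⊗ R.obj Y ⟶ L.obj (X ⊗ Y)}
    (h : IsLinearFunctor R L r2 r0 L2 L0 νrR νlR νrL νlL)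
    (ω : R ≅ L)
    (hω3 : ∀ X Y : C, νrR X Y ≫ (𝟙 (L.obj X) ⊗ₘ ω.hom.app Y) = ω.hom.app (X ⊗ Y) ≫ L2 X Y)
    (hω4 : ∀ X Y : C, νlR X Y ≫ (ω.hom.app X ⊗ₘ 𝟙 (L.obj Y)) = ω.hom.app (X ⊗ Y) ≫ L2 X Y) :
    (∀ X Y Z : C,
      r2 X (Y ⊗ Z) ≫ R.map (α_ X Y Z).inv ≫
        (ω.hom.app ((X ⊗ Y) ⊗ Z) ≫ L2 (X ⊗ Y) Z ≫
          (ω.inv.app (X ⊗ Y) ⊗ₘ ω.inv.app Z)) =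
      (𝟙 (R.obj X) ⊗ₘ (ω.hom.app (Y ⊗ Z) ≫ L2 Y Z ≫ (ω.inv.app Y ⊗ₘ ω.inv.app Z))) ≫
        (α_ (R.obj X) (R.obj Y) (R.obj Z)).inv ≫ (r2 X Y ⊗ₘ 𝟙 (R.obj Z))) ∧
    (∀ X Y Z : C,
      r2 (X ⊗ Y) Z ≫ R.map (α_ X Y Z).hom ≫
        (ω.hom.app (X ⊗ (Y ⊗ Z)) ≫ L2 X (Y ⊗ Z) ≫
          (ω.inv.app X ⊗ₘ ω.inv.app (Y ⊗ Z))) =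
      ((ω.hom.app (X ⊗ Y) ≫ L2 X Y ≫ (ω.inv.app X ⊗ₘ ω.inv.app Y)) ⊗ₘ 𝟙 (R.obj Z)) ≫
        (α_ (R.obj X) (R.obj Y) (R.obj Z)).hom ≫
        (𝟙 (R.obj X) ⊗ₘ r2 Y Z)) := by
  refine ⟨fun X Y Z => ?_, fun X Y Z => ?_⟩
  · rw [id_tensorHom, tensorHom_id]
    exact h.transportedδ_frobenius_left ω hω4 X Y Z
  · rw [id_tensorHom, tensorHom_id]
    exact h.transportedδ_frobenius_right ω hω3 X Y Z

/-- If `(R, L)` is a linear functor and `ω : R ≅ L` is a natural isomorphism compatible with the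
linear structure (the four conditions of the paper), then `R`, with its lax structure and the
oplax structure transported from `L` along `ω`, is Frobenius monoidal. -/
theorem linearFunctor_with_compatible_iso_frobenius
    {R L : C ⥤ D}
    {r2 : ∀ X Y : C, R.obj X ⊗ R.obj Y ⟶ R.obj (X ⊗ Y)} {r0 : 𝟙_ D ⟶ R.obj (𝟙_ C)}
    {L2 : ∀ X Y : C, L.obj (X ⊗ Y) ⟶ L.obj X ⊗ L.obj Y} {L0 : L.obj (𝟙_ C) ⟶ 𝟙_ D}
    {νrR : ∀ X Y : C, R.obj (X ⊗ Y) ⟶ L.obj X ⊗ R.obj Y}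
    {νlR : ∀ X Y : C, R.obj (X ⊗ Y) ⟶ R.obj X ⊗ L.obj Y}
    {νrL : ∀ X Y : C, R.obj X ⊗ L.obj Y ⟶ L.obj (X ⊗ Y)}
    {νlL : ∀ X Y : C, L.obj X ⊗ R.obj Y ⟶ L.obj (X ⊗ Y)}
    (h : IsLinearFunctor R L r2 r0 L2 L0 νrR νlR νrL νlL)
    (ω : R ≅ L)
    (hω1 : ∀ X Y : C, (𝟙 (R.obj X) ⊗ₘ ω.hom.app Y) ≫ νrL X Y = r2 X Y ≫ ω.hom.app (X ⊗ Y))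
    (hω2 : ∀ X Y : C, (ω.hom.app X ⊗ₘ 𝟙 (R.obj Y)) ≫ νlL X Y = r2 X Y ≫ ω.hom.app (X ⊗ Y))
    (hω3 : ∀ X Y : C, νrR X Y ≫ (𝟙 (L.obj X) ⊗ₘ ω.hom.app Y) = ω.hom.app (X ⊗ Y) ≫ L2 X Y)
    (hω4 : ∀ X Y : C, νlR X Y ≫ (ω.hom.app X ⊗ₘ 𝟙 (L.obj Y)) = ω.hom.app (X ⊗ Y) ≫ L2 X Y) :
    (∀ X Y Z : C,
      r2 X (Y ⊗ Z) ≫ R.map (α_ X Y Z).inv ≫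
        (ω.hom.app ((X ⊗ Y) ⊗ Z) ≫ L2 (X ⊗ Y) Z ≫
          (ω.inv.app (X ⊗ Y) ⊗ₘ ω.inv.app Z)) =
      (𝟙 (R.obj X) ⊗ₘ (ω.hom.app (Y ⊗ Z) ≫ L2 Y Z ≫ (ω.inv.app Y ⊗ₘ ω.inv.app Z))) ≫
        (α_ (R.obj X) (R.obj Y) (R.obj Z)).inv ≫ (r2 X Y ⊗ₘ 𝟙 (R.obj Z))) ∧
    (∀ X Y Z : C,
      r2 (X ⊗ Y) Z ≫ R.map (α_ X Y Z).hom ≫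
        (ω.hom.app (X ⊗ (Y ⊗ Z)) ≫ L2 X (Y ⊗ Z) ≫
          (ω.inv.app X ⊗ₘ ω.inv.app (Y ⊗ Z))) =
      ((ω.hom.app (X ⊗ Y) ≫ L2 X Y ≫ (ω.inv.app X ⊗ₘ ω.inv.app Y)) ⊗ₘ 𝟙 (R.obj Z)) ≫
        (α_ (R.obj X) (R.obj Y) (R.obj Z)).hom ≫
        (𝟙 (R.obj X) ⊗ₘ r2 Y Z)) :=
  linearFunctor_with_compatible_iso_frobenius_general h ω hω3 hω4
end
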